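/- arXiv:1701.00187 — 9 statements merged into one kernel-verified Lean document; each statement's English description precedes it below -/
import Mathlib

section
/- Let T : V → ℝ be a Bellman fixed point and let (T_i) be the chase-time iteration. Then for every i ≥ 1 and every vertex v ∈ V, T_i(v) ≥ T(v). -/
/-! A Bellman fixed point `T` satisfies `p v * T v ≤ 1` (take `u = v` in the minimum), so it lies
below the initial iterate `1 / p`. The Bellman operator is monotone because `1 - p v ≥ 0`, hence
each step of the chase-time iteration preserves the bound `T ≤ T_i`. -/

section Bellman

variable {V : Type*} (N : V → Finset V) (hN : ∀ v, v ∈ N v) (p : V → ℝ)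

def bellman (S : V → ℝ) (v : V) : ℝ :=
  1 + (1 - p v) * (N v).inf' ⟨v, hN v⟩ S

variable {N hN p}

lemma bellman_le_bellman {S S' : V → ℝ} (hSS' : S ≤ S') {v : V} (hpv : p v ≤ 1) :
    bellman N hN p S v ≤ bellman N hN p S' v := by
  have hinf : (N v).inf' ⟨v, hN v⟩ S ≤ (N v).inf' ⟨v, hN v⟩ S' :=
    Finset.inf'_mono_fun fun u _ => hSS' u
  unfold bellman
  gcongr

lemma le_one_div_of_eq_bellman {T : V → ℝ} {v : V} (hT : T v = bellman N hN p T v)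
    (hpv0 : 0 < p v) (hpv1 : p v ≤ 1) : T v ≤ 1 / p v := by
  have hinf : (N v).inf' ⟨v, hN v⟩ T ≤ T v := Finset.inf'_le T (hN v)
  have hself : T v ≤ 1 + (1 - p v) * T v := by
    calc T v = bellman N hN p T v := hT
      _ ≤ 1 + (1 - p v) * T v := by
        unfold bellman
        gcongr
  rw [le_div_iff₀ hpv0]
  linarith

end Bellman

theorem stmt_1_general {V : Type*}
    (N : V → Finset V) (hN : ∀ v, v ∈ N v)
    (p : V → ℝ) (hp : ∀ v, 0 < p v ∧ p v ≤ 1)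
    (T : V → ℝ)
    (hT : ∀ v, T v = 1 + (1 - p v) * (N v).inf' ⟨v, hN v⟩ T)
    (Tseq : ℕ → V → ℝ)
    (hTseq1 : ∀ v, Tseq 1 v = 1 / p v)
    (hTseqS : ∀ i, 1 ≤ i → ∀ v,
      Tseq (i + 1) v =
        min (Tseq i v) (1 + (1 - p v) * (N v).inf' ⟨v, hN v⟩ (Tseq i))) :
    ∀ i, 1 ≤ i → ∀ v, T v ≤ Tseq i v := by
  intro i hi
  induction i, hi using Nat.le_induction with
  | base =>
    intro v
    rw [hTseq1 v]
    exact le_one_div_of_eq_bellman (hN := hN) (hT v) (hp v).1 (hp v).2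
  | succ i hi ih =>
    intro v
    rw [hTseqS i hi v]
    refine le_min (ih v) ?_
    rw [hT v]
    exact bellman_le_bellman (hN := hN) ih (hp v).2

/-- Let `T` be a Bellman fixed point and `(Tseq i)` the chase-time
iteration. Then for every `i ≥ 1` and every vertex `v`, `Tseq i v ≥ T v`. -/
theorem stmt_1 {V : Type*} [Fintype V] [Nonempty V]
    (N : V → Finset V) (hN : ∀ v, v ∈ N v)
    (p : V → ℝ) (hp : ∀ v, 0 < p v ∧ p v ≤ 1)
    (T : V → ℝ)
    (hT : ∀ v, T v = 1 + (1 - p v) * (N v).inf' ⟨v, hN v⟩ T)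
    (Tseq : ℕ → V → ℝ)
    (hTseq1 : ∀ v, Tseq 1 v = 1 / p v)
    (hTseqS : ∀ i, 1 ≤ i → ∀ v,
      Tseq (i + 1) v =
        min (Tseq i v) (1 + (1 - p v) * (N v).inf' ⟨v, hN v⟩ (Tseq i))) :
    ∀ i, 1 ≤ i → ∀ v, T v ≤ Tseq i v :=
  stmt_1_general N hN p hp T hT Tseq hTseq1 hTseqS
end

section
/- Let T : V → ℝ be a Bellman fixed point and suppose the vertex v has shortest chase length 1 with respect to T (equivalently, T(v) = 1/p(v)). Then p(v) = max_{u ∈ N(v)} p(u), i.e., p(u) ≤ p(v) for every u ∈ N(v). -/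
/-- A chase path with respect to `T`: a sequence `vs 0, vs 1, …, vs k` such that
each step moves to a closed neighbor and `T (vs i) = 1 + (1 - p (vs i)) * T (vs (i+1))`
for `0 ≤ i < k`, and the last vertex satisfies `T (vs k) = 1 + (1 - p (vs k)) * T (vs k)`. -/
def IsChasePath {V : Type*} (N : V → Finset V) (p T : V → ℝ) (k : ℕ) (vs : ℕ → V) : Prop :=
  (∀ i < k, vs (i + 1) ∈ N (vs i) ∧ T (vs i) = 1 + (1 - p (vs i)) * T (vs (i + 1))) ∧
    T (vs k) = 1 + (1 - p (vs k)) * T (vs k)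

/-- A shortest chase path: a chase path starting at `vs 0` such that no chase path
starting at the same vertex has strictly fewer vertices. -/
def IsShortestChasePath {V : Type*} (N : V → Finset V) (p T : V → ℝ) (k : ℕ) (vs : ℕ → V) : Prop :=
  IsChasePath N p T k vs ∧
    ∀ (k' : ℕ) (vs' : ℕ → V), vs' 0 = vs 0 → IsChasePath N p T k' vs' → k ≤ k'

/-- The vertex `v` has shortest chase length `n`: some shortest chase path starting
at `v` has exactly `n` vertices (i.e. `n = k + 1` where `k` is its number of edges). -/
def HasShortestChaseLength {V : Type*} (N : V → Finset V) (p T : V → ℝ) (v : V) (n : ℕ) : Prop :=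
  ∃ (k : ℕ) (vs : ℕ → V), vs 0 = v ∧ IsShortestChasePath N p T k vs ∧ n = k + 1

/-!
A shortest chase of length one at `v` means `T v = 1 + (1 - p v) T v`, i.e. `p v T v = 1`.
If `p v < 1`, the Bellman equation at `v` then forces the minimum of `T` over `N v` to be
attained at `v`, so `T v ≤ T u` for all `u ∈ N v`. Every vertex satisfies `p u T u ≤ 1`
(take `u` itself in the minimum), hence `p u T v ≤ p u T u ≤ 1 = p v T v`.
-/

section Bellman

variable {V : Type*} {p T : V → ℝ} {s : Finset V} {v : V}

lemma mul_le_one_of_bellman (hv : v ∈ s) (hpv : p v ≤ 1)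
    (hT : T v = 1 + (1 - p v) * s.inf' ⟨v, hv⟩ T) : p v * T v ≤ 1 := by
  have hinf : s.inf' ⟨v, hv⟩ T ≤ T v := Finset.inf'_le T hv
  nlinarith

lemma inf'_eq_of_bellman_of_mul_eq_one (hv : v ∈ s) (hpv : p v < 1)
    (hT : T v = 1 + (1 - p v) * s.inf' ⟨v, hv⟩ T) (hfix : p v * T v = 1) :
    s.inf' ⟨v, hv⟩ T = T v := by
  have h : (1 - p v) * (s.inf' ⟨v, hv⟩ T - T v) = 0 := by linear_combination hfix - hT
  exact sub_eq_zero.mp ((mul_eq_zero.mp h).resolve_left (sub_ne_zero.mpr hpv.ne'))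

lemma mul_eq_one_of_hasShortestChaseLength_one {N : V → Finset V}
    (h : HasShortestChaseLength N p T v 1) : p v * T v = 1 := by
  obtain ⟨k, vs, rfl, ⟨⟨-, hlast⟩, -⟩, hk⟩ := h
  obtain rfl : k = 0 := by omega
  linarith

end Bellman

theorem stmt_5_general {V : Type*}
    (N : V → Finset V) (hN : ∀ v, v ∈ N v)
    (p : V → ℝ) (hp : ∀ v, 0 < p v ∧ p v ≤ 1)
    (T : V → ℝ)
    (hT : ∀ v, T v = 1 + (1 - p v) * (N v).inf' ⟨v, hN v⟩ T)
    (v : V) (hlen : HasShortestChaseLength N p T v 1) :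
    p v = (N v).sup' ⟨v, hN v⟩ p ∧ ∀ u ∈ N v, p u ≤ p v := by
  have hfix := mul_eq_one_of_hasShortestChaseLength_one hlen
  have hle : ∀ u ∈ N v, p u ≤ p v := by
    intro u hu
    rcases (hp v).2.eq_or_lt with hpv_eq | hpv_lt
    · exact hpv_eq ▸ (hp u).2
    · have hTvu : T v ≤ T u :=
        inf'_eq_of_bellman_of_mul_eq_one (hN v) hpv_lt (hT v) hfix ▸ Finset.inf'_le T hu
      have hTv : 0 < T v := pos_of_mul_pos_right (hfix ▸ one_pos) (hp v).1.le
      have hu1 := mul_le_one_of_bellman (hN u) (hp u).2 (hT u)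
      nlinarith [(hp u).1]
  exact ⟨le_antisymm (Finset.le_sup' p (hN v)) (Finset.sup'_le _ _ hle), hle⟩

/-- If the vertex `v` has shortest chase length `1` with respect to a
Bellman fixed point `T` (equivalently `T v = 1 / p v`), then
`p v = max_{u ∈ N v} p u`, i.e. `p u ≤ p v` for every `u ∈ N v`. -/
theorem stmt_5 {V : Type*} [Fintype V] [Nonempty V]
    (N : V → Finset V) (hN : ∀ v, v ∈ N v)
    (p : V → ℝ) (hp : ∀ v, 0 < p v ∧ p v ≤ 1)
    (T : V → ℝ)
    (hT : ∀ v, T v = 1 + (1 - p v) * (N v).inf' ⟨v, hN v⟩ T)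
    (v : V) (hlen : HasShortestChaseLength N p T v 1) :
    p v = (N v).sup' ⟨v, hN v⟩ p ∧ ∀ u ∈ N v, p u ≤ p v :=
  stmt_5_general N hN p hp T hT v hlen
end

section
/- Let T : V → ℝ be a Bellman fixed point, let (T_i) be the chase-time iteration, and suppose the vertex v has shortest chase length k with respect to T. Then T_k(v) = T(v). -/
section ChaseTime

variable {V : Type*} (N : V → Finset V) (hN : ∀ v, v ∈ N v) (p : V → ℝ)

def bellmanStep (f : V → ℝ) (v : V) : ℝ :=
  1 + (1 - p v) * (N v).inf' ⟨v, hN v⟩ f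

variable {N p}

theorem bellmanStep_mono {f g : V → ℝ} (hfg : f ≤ g) {v : V} (hpv : p v ≤ 1) :
    bellmanStep N hN p f v ≤ bellmanStep N hN p g v := by
  have hinf : (N v).inf' ⟨v, hN v⟩ f ≤ (N v).inf' ⟨v, hN v⟩ g :=
    Finset.inf'_mono_fun fun u _ => hfg u
  unfold bellmanStep
  nlinarith

theorem bellmanStep_le_of_mem (f : V → ℝ) {u v : V} (hu : u ∈ N v) (hpv : p v ≤ 1) :
    bellmanStep N hN p f v ≤ 1 + (1 - p v) * f u := by
  have hinf : (N v).inf' ⟨v, hN v⟩ f ≤ f u := Finset.inf'_le f hu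
  unfold bellmanStep
  nlinarith

theorem le_one_div_of_eq_bellmanStep {T : V → ℝ} {v : V} (hp : 0 < p v ∧ p v ≤ 1)
    (hTv : T v = bellmanStep N hN p T v) : T v ≤ 1 / p v := by
  have hle := bellmanStep_le_of_mem hN T (hN v) hp.2
  rw [le_div_iff₀ hp.1]
  nlinarith

theorem le_chaseIter {T : V → ℝ} {Tseq : ℕ → V → ℝ} (hp : ∀ v, 0 < p v ∧ p v ≤ 1)
    (hT : ∀ v, T v = bellmanStep N hN p T v) (hTseq1 : ∀ v, Tseq 1 v = 1 / p v)
    (hTseqS : ∀ i, 1 ≤ i → ∀ v, Tseq (i + 1) v = min (Tseq i v) (bellmanStep N hN p (Tseq i) v))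
    {i : ℕ} (hi : 1 ≤ i) : T ≤ Tseq i := by
  induction i, hi using Nat.le_induction with
  | base => exact fun v => (hTseq1 v).symm ▸ le_one_div_of_eq_bellmanStep hN (hp v) (hT v)
  | succ i hi ih =>
    intro v
    rw [hTseqS i hi v, hT v]
    exact le_min ((hT v).symm ▸ ih v) (bellmanStep_mono hN ih (hp v).2)

end ChaseTime

section ChasePath

variable {V : Type*} {N : V → Finset V} {p T : V → ℝ}

theorem IsChasePath.tail {k : ℕ} {vs : ℕ → V} (h : IsChasePath N p T (k + 1) vs) :
    IsChasePath N p T k (fun i => vs (i + 1)) :=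
  ⟨fun i hi => h.1 (i + 1) (by omega), h.2⟩

theorem IsChasePath.eq_one_div_of_len_zero {vs : ℕ → V} (h : IsChasePath N p T 0 vs)
    (hp : p (vs 0) ≠ 0) : T (vs 0) = 1 / p (vs 0) := by
  rw [eq_div_iff hp]
  linarith [h.2]

theorem IsChasePath.chaseIter_le (hN : ∀ v, v ∈ N v) {Tseq : ℕ → V → ℝ}
    (hp0 : ∀ v, p v ≠ 0) (hp1 : ∀ v, p v ≤ 1) (hTseq1 : ∀ v, Tseq 1 v = 1 / p v)
    (hTseqS : ∀ i, 1 ≤ i → ∀ v, Tseq (i + 1) v = min (Tseq i v) (bellmanStep N hN p (Tseq i) v))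
    {k : ℕ} {vs : ℕ → V} (h : IsChasePath N p T k vs) : Tseq (k + 1) (vs 0) ≤ T (vs 0) := by
  induction k generalizing vs with
  | zero => rw [hTseq1, h.eq_one_div_of_len_zero (hp0 _)]
  | succ k ih =>
    obtain ⟨hmem, hstep⟩ := h.1 0 k.succ_pos
    have htail : Tseq (k + 1) (vs 1) ≤ T (vs 1) := ih h.tail
    calc Tseq (k + 1 + 1) (vs 0) ≤ bellmanStep N hN p (Tseq (k + 1)) (vs 0) := by
          rw [hTseqS (k + 1) k.succ_pos]
          exact min_le_right _ _
      _ ≤ 1 + (1 - p (vs 0)) * Tseq (k + 1) (vs 1) := bellmanStep_le_of_mem hN _ hmem (hp1 _)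
      _ ≤ 1 + (1 - p (vs 0)) * T (vs 1) := by nlinarith [hp1 (vs 0)]
      _ = T (vs 0) := hstep.symm

end ChasePath

theorem stmt_6_general {V : Type*}
    (N : V → Finset V) (hN : ∀ v, v ∈ N v)
    (p : V → ℝ) (hp : ∀ v, 0 < p v ∧ p v ≤ 1)
    (T : V → ℝ)
    (hT : ∀ v, T v = 1 + (1 - p v) * (N v).inf' ⟨v, hN v⟩ T)
    (Tseq : ℕ → V → ℝ)
    (hTseq1 : ∀ v, Tseq 1 v = 1 / p v)
    (hTseqS : ∀ i, 1 ≤ i → ∀ v,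
      Tseq (i + 1) v =
        min (Tseq i v) (1 + (1 - p v) * (N v).inf' ⟨v, hN v⟩ (Tseq i)))
    (v : V) (k : ℕ) (hlen : HasShortestChaseLength N p T v k) :
    Tseq k v = T v := by
  obtain ⟨k, vs, rfl, ⟨hpath, -⟩, rfl⟩ := hlen
  exact le_antisymm
    (hpath.chaseIter_le hN (fun v => (hp v).1.ne') (fun v => (hp v).2) hTseq1 hTseqS)
    (le_chaseIter hN hp hT hTseq1 hTseqS k.succ_pos (vs 0))

/-- Let `T` be a Bellman fixed point, `(Tseq i)` the chase-time
iteration, and suppose `v` has shortest chase length `k` with respect to `T`.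
Then `Tseq k v = T v`. -/
theorem stmt_6 {V : Type*} [Fintype V] [Nonempty V]
    (N : V → Finset V) (hN : ∀ v, v ∈ N v)
    (p : V → ℝ) (hp : ∀ v, 0 < p v ∧ p v ≤ 1)
    (T : V → ℝ)
    (hT : ∀ v, T v = 1 + (1 - p v) * (N v).inf' ⟨v, hN v⟩ T)
    (Tseq : ℕ → V → ℝ)
    (hTseq1 : ∀ v, Tseq 1 v = 1 / p v)
    (hTseqS : ∀ i, 1 ≤ i → ∀ v,
      Tseq (i + 1) v =
        min (Tseq i v) (1 + (1 - p v) * (N v).inf' ⟨v, hN v⟩ (Tseq i)))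
    (v : V) (k : ℕ) (hlen : HasShortestChaseLength N p T v k) :
    Tseq k v = T v :=
  stmt_6_general N hN p hp T hT Tseq hTseq1 hTseqS v k hlen
end

section
/- Let T : V → ℝ be a Bellman fixed point. Every shortest chase path with respect to T is simple, i.e., it visits no vertex more than once. -/
/-!
A chase path that visits a vertex twice, at positions `a < b`, stays a chase path when the
loop `vs a, …, vs (b - 1)` is cut out, since both the step condition and the terminal
condition only involve consecutive vertices. The result starts at the same vertex and is
strictly shorter, so a shortest chase path cannot repeat a vertex.
-/

section

variable {V : Type*} {N : V → Finset V} {p T : V → ℝ} {k : ℕ} {vs : ℕ → V}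

def cutLoop (vs : ℕ → V) (a b : ℕ) : ℕ → V :=
  fun n => if n < a then vs n else vs (n + (b - a))

lemma cutLoop_of_le {a b n : ℕ} (hab : a ≤ b) (heq : vs a = vs b) (hn : n ≤ a) :
    cutLoop vs a b n = vs n := by
  rcases hn.lt_or_eq with hn | rfl
  · simp [cutLoop, hn]
  · simp [cutLoop, Nat.add_sub_cancel' hab, heq]

lemma cutLoop_of_ge {a b n : ℕ} (hn : a ≤ n) : cutLoop vs a b n = vs (n + (b - a)) := by
  simp [cutLoop, Nat.not_lt.mpr hn]

lemma IsChasePath.cutLoop {a b : ℕ} (h : IsChasePath N p T k vs) (hab : a ≤ b) (hbk : b ≤ k)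
    (heq : vs a = vs b) : IsChasePath N p T (k - (b - a)) (cutLoop vs a b) := by
  obtain ⟨hstep, hend⟩ := h
  refine ⟨fun n hn => ?_, ?_⟩
  · rcases Nat.lt_or_ge n a with hna | han
    · rw [cutLoop_of_le hab heq hna.le, cutLoop_of_le hab heq hna]
      exact hstep n (by omega)
    · rw [cutLoop_of_ge han, cutLoop_of_ge (by omega), Nat.add_right_comm]
      exact hstep _ (by omega)
  · rw [cutLoop_of_ge (by omega), Nat.sub_add_cancel (by omega)]
    exact hend

lemma IsShortestChasePath.ne_of_lt {a b : ℕ} (h : IsShortestChasePath N p T k vs)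
    (hab : a < b) (hbk : b ≤ k) : vs a ≠ vs b := by
  intro heq
  have hstart : cutLoop vs a b 0 = vs 0 := cutLoop_of_le hab.le heq (Nat.zero_le a)
  have := h.2 _ _ hstart (h.1.cutLoop hab.le hbk heq)
  omega

end

theorem stmt_7_general {V : Type*}
    (N : V → Finset V)
    (p : V → ℝ)
    (T : V → ℝ)
    (k : ℕ) (vs : ℕ → V)
    (hpath : IsShortestChasePath N p T k vs) :
    ∀ i j, i ≤ k → j ≤ k → vs i = vs j → i = j := by
  intro i j hik hjk heq
  rcases lt_trichotomy i j with hij | hij | hji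
  · exact absurd heq (hpath.ne_of_lt hij hjk)
  · exact hij
  · exact absurd heq.symm (hpath.ne_of_lt hji hik)

/-- Every shortest chase path with respect to a Bellman fixed point `T`
is simple, i.e. it visits no vertex more than once. -/
theorem stmt_7 {V : Type*} [Fintype V] [Nonempty V]
    (N : V → Finset V) (hN : ∀ v, v ∈ N v)
    (p : V → ℝ) (hp : ∀ v, 0 < p v ∧ p v ≤ 1)
    (T : V → ℝ)
    (hT : ∀ v, T v = 1 + (1 - p v) * (N v).inf' ⟨v, hN v⟩ T)
    (k : ℕ) (vs : ℕ → V)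
    (hpath : IsShortestChasePath N p T k vs) :
    ∀ i j, i ≤ k → j ≤ k → vs i = vs j → i = j :=
  stmt_7_general N p T k vs hpath
end

section
/- Let T : V → ℝ be a Bellman fixed point and let (v_0, v_1, …, v_k) be a chase path with respect to T. If T(v_{i+1}) = T(v_i) for some 0 ≤ i < k (i.e., the vertex u = v_{i+1} following v = v_i has the same value of T), then T(v_{i+1}) = T(v_i) = 1/p(v_i) and p(v_{i+1}) ≤ p(v_i). -/
lemma eq_one_div_of_eq_one_add_one_sub_mul_self {K : Type*} [Field K] {p t : K} (hp : p ≠ 0)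
    (h : t = 1 + (1 - p) * t) : t = 1 / p := by
  rw [eq_div_iff hp]
  linear_combination h

lemma mul_le_one_of_eq_one_add_one_sub_mul_inf' {K V : Type*} [Field K] [LinearOrder K]
    [IsStrictOrderedRing K] {s : Finset V} {v : V} (hv : v ∈ s) {p : K} (hp : p ≤ 1) {T : V → K}
    (h : T v = 1 + (1 - p) * s.inf' ⟨v, hv⟩ T) : p * T v ≤ 1 := by
  have hmin := mul_le_mul_of_nonneg_left (s.inf'_le T hv) (sub_nonneg.2 hp)
  linarith

theorem stmt_10_general {V : Type*}
    (N : V → Finset V) (hN : ∀ v, v ∈ N v)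
    (p : V → ℝ) (hp : ∀ v, 0 < p v ∧ p v ≤ 1)
    (T : V → ℝ)
    (hT : ∀ v, T v = 1 + (1 - p v) * (N v).inf' ⟨v, hN v⟩ T)
    (k : ℕ) (vs : ℕ → V)
    (hpath : IsChasePath N p T k vs)
    (i : ℕ) (hi : i < k) (heq : T (vs (i + 1)) = T (vs i)) :
    T (vs (i + 1)) = 1 / p (vs i) ∧ T (vs i) = 1 / p (vs i) ∧
      p (vs (i + 1)) ≤ p (vs i) := by
  obtain ⟨-, hstep⟩ := hpath.1 i hi
  have hTv : T (vs i) = 1 / p (vs i) :=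
    eq_one_div_of_eq_one_add_one_sub_mul_self (hp _).1.ne' (by rwa [heq] at hstep)
  refine ⟨heq.trans hTv, hTv, ?_⟩
  have hle := mul_le_one_of_eq_one_add_one_sub_mul_inf' (hN _) (hp (vs (i + 1))).2 (hT _)
  rwa [heq, hTv, mul_one_div, div_le_one (hp _).1] at hle

/-- Let `(v_0, …, v_k)` be a chase path with respect to a Bellman fixed
point `T`. If `T (v_{i+1}) = T (v_i)` for some `0 ≤ i < k`, then
`T (v_{i+1}) = T (v_i) = 1 / p (v_i)` and `p (v_{i+1}) ≤ p (v_i)`. -/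
theorem stmt_10 {V : Type*} [Fintype V] [Nonempty V]
    (N : V → Finset V) (hN : ∀ v, v ∈ N v)
    (p : V → ℝ) (hp : ∀ v, 0 < p v ∧ p v ≤ 1)
    (T : V → ℝ)
    (hT : ∀ v, T v = 1 + (1 - p v) * (N v).inf' ⟨v, hN v⟩ T)
    (k : ℕ) (vs : ℕ → V)
    (hpath : IsChasePath N p T k vs)
    (i : ℕ) (hi : i < k) (heq : T (vs (i + 1)) = T (vs i)) :
    T (vs (i + 1)) = 1 / p (vs i) ∧ T (vs i) = 1 / p (vs i) ∧
      p (vs (i + 1)) ≤ p (vs i) :=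
  stmt_10_general N hN p hp T hT k vs hpath i hi heq
end

section
/- Let T : V → ℝ be a Bellman fixed point. Then for every vertex w ∈ V, T(w) ≥ 1 / (max_{u ∈ V} p(u)). -/
/-!
At a vertex `v` where `T` is globally minimal, the minimum of `T` over `N v` is `T v` itself,
so the Bellman equation there reads `T v = 1 + (1 - p v) T v`, i.e. `T v = 1 / p v`.
Hence `min T = 1 / p v ≥ 1 / max p`.
-/

theorem mul_eq_one_of_eq_one_add_mul_inf' {ι : Type*} {s : Finset ι} (hs : s.Nonempty)
    {T : ι → ℝ} {v : ι} (hv : v ∈ s) (hmin : ∀ u ∈ s, T v ≤ T u) {q : ℝ}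
    (hT : T v = 1 + (1 - q) * s.inf' hs T) : q * T v = 1 := by
  have hinf : s.inf' hs T = T v := le_antisymm (s.inf'_le T hv) (s.le_inf' hs T hmin)
  rw [hinf] at hT
  linarith

/-- Let `T` be a Bellman fixed point. Then for every vertex `w`,
`T w ≥ 1 / (max_{u ∈ V} p u)`. -/
theorem stmt_11 {V : Type*} [Fintype V] [Nonempty V]
    (N : V → Finset V) (hN : ∀ v, v ∈ N v)
    (p : V → ℝ) (hp : ∀ v, 0 < p v ∧ p v ≤ 1)
    (T : V → ℝ)
    (hT : ∀ v, T v = 1 + (1 - p v) * (N v).inf' ⟨v, hN v⟩ T) :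
    ∀ w, 1 / (Finset.univ.sup' Finset.univ_nonempty p) ≤ T w := by
  obtain ⟨v, hv⟩ := Finite.exists_min T
  have hpv : 0 < p v := (hp v).1
  have hTv : T v = 1 / p v := by
    rw [eq_div_iff hpv.ne', mul_comm]
    exact mul_eq_one_of_eq_one_add_mul_inf' _ (hN v) (fun u _ => hv u) (hT v)
  intro w
  calc 1 / Finset.univ.sup' Finset.univ_nonempty p ≤ 1 / p v :=
        one_div_le_one_div_of_le hpv (Finset.le_sup' p (Finset.mem_univ v))
    _ = T v := hTv.symm
    _ ≤ T w := hv w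
end

section
/- Let T : V → ℝ be a Bellman fixed point and let v be a vertex with maximal gambler probability, i.e., p(v) = max_{u ∈ V} p(u). Then T(v) = 1/p(v). -/
/-!
Let `w` be a vertex where `T` is minimal. Since every value of `T` is at least `T w`, the
fixed-point equation at `w` gives `T w ≥ 1 + (1 - p w) T w`, i.e. `T w ≥ 1 / p w ≥ 1 / p v`.
At the maximiser `v` the minimum over `N v` is therefore at least `1 / p v`, giving
`T v ≥ 1 / p v`, while `v ∈ N v` bounds it by `T v`, giving `T v ≤ 1 + (1 - p v) T v`,
i.e. `T v ≤ 1 / p v`.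
-/

open Finset

lemma one_div_le_iff_one_add_sub_mul_le {q x : ℝ} (hq : 0 < q) :
    1 / q ≤ x ↔ 1 + (1 - q) * x ≤ x := by
  rw [div_le_iff₀ hq]
  constructor <;> intro h <;> linarith

lemma le_one_div_iff_le_one_add_sub_mul {q x : ℝ} (hq : 0 < q) :
    x ≤ 1 / q ↔ x ≤ 1 + (1 - q) * x := by
  rw [le_div_iff₀ hq]
  constructor <;> intro h <;> linarith

lemma one_add_sub_mul_one_div {q : ℝ} (hq : q ≠ 0) : 1 + (1 - q) * (1 / q) = 1 / q := by
  field_simp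
  ring

section Bellman

variable {V : Type*} [Fintype V] [Nonempty V] {N : V → Finset V} (hN : ∀ v, v ∈ N v)
  {p : V → ℝ} {T : V → ℝ}

lemma one_div_sup'_le_of_bellman (hp : ∀ v, 0 < p v ∧ p v ≤ 1)
    (hT : ∀ v, T v = 1 + (1 - p v) * (N v).inf' ⟨v, hN v⟩ T) (u : V) :
    1 / univ.sup' univ_nonempty p ≤ T u := by
  obtain ⟨w, -, hw⟩ := exists_min_image univ T univ_nonempty
  have hmin : T w ≤ (N w).inf' ⟨w, hN w⟩ T := le_inf' _ _ fun x _ ↦ hw x (mem_univ x)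
  have hTw : 1 / p w ≤ T w := by
    rw [one_div_le_iff_one_add_sub_mul_le (hp w).1]
    calc 1 + (1 - p w) * T w
        ≤ 1 + (1 - p w) * (N w).inf' ⟨w, hN w⟩ T := by
          gcongr
          linarith [(hp w).2]
      _ = T w := (hT w).symm
  calc 1 / univ.sup' univ_nonempty p ≤ 1 / p w :=
        one_div_le_one_div_of_le (hp w).1 (le_sup' p (mem_univ w))
    _ ≤ T w := hTw
    _ ≤ T u := hw u (mem_univ u)

end Bellman

/-- Let `T` be a Bellman fixed point and let `v` be a vertex with
maximal gambler probability, i.e. `p v = max_{u ∈ V} p u`. Then `T v = 1 / p v`. -/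
theorem stmt_12 {V : Type*} [Fintype V] [Nonempty V]
    (N : V → Finset V) (hN : ∀ v, v ∈ N v)
    (p : V → ℝ) (hp : ∀ v, 0 < p v ∧ p v ≤ 1)
    (T : V → ℝ)
    (hT : ∀ v, T v = 1 + (1 - p v) * (N v).inf' ⟨v, hN v⟩ T)
    (v : V) (hv : p v = Finset.univ.sup' Finset.univ_nonempty p) :
    T v = 1 / p v := by
  have hpv : 0 ≤ 1 - p v := by linarith [(hp v).2]
  apply le_antisymm
  · rw [le_one_div_iff_le_one_add_sub_mul (hp v).1]
    calc T v = 1 + (1 - p v) * (N v).inf' ⟨v, hN v⟩ T := hT v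
      _ ≤ 1 + (1 - p v) * T v := by gcongr; exact inf'_le T (hN v)
  · have hinf : 1 / p v ≤ (N v).inf' ⟨v, hN v⟩ T :=
      le_inf' _ _ fun u _ ↦ hv ▸ one_div_sup'_le_of_bellman hN hp hT u
    calc 1 / p v = 1 + (1 - p v) * (1 / p v) := (one_add_sub_mul_one_div (hp v).1.ne').symm
      _ ≤ 1 + (1 - p v) * (N v).inf' ⟨v, hN v⟩ T := by gcongr
      _ = T v := (hT v).symm
end

section
/- Let T* be the unique Bellman fixed point. Then every vertex v ∈ V has at least one chase path with respect to T* starting at v. -/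
/-! Take a vertex `v` of minimal `T`-value among those without a chase path, and a neighbour `u`
attaining the minimum in the Bellman equation at `v`. Since `v ∈ N v`, `T u ≤ T v`. If equality
holds, `v` alone is a chase path; otherwise `u` has a chase path, and prepending `v` gives one
from `v`. -/

namespace IsChasePath

variable {V : Type*} {N : V → Finset V} {p T : V → ℝ}

theorem const {w : V} (h : T w = 1 + (1 - p w) * T w) : IsChasePath N p T 0 fun _ => w :=
  ⟨fun _ hi => absurd hi (Nat.not_lt_zero _), h⟩

theorem exists_cons {k : ℕ} {vs : ℕ → V} (hvs : IsChasePath N p T k vs) {w : V}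
    (hmem : vs 0 ∈ N w) (hstep : T w = 1 + (1 - p w) * T (vs 0)) :
    ∃ ws : ℕ → V, ws 0 = w ∧ IsChasePath N p T (k + 1) ws := by
  refine ⟨fun | 0 => w | i + 1 => vs i, rfl, fun i hi => ?_, hvs.2⟩
  cases i with
  | zero => exact ⟨hmem, hstep⟩
  | succ i => exact hvs.1 i (by omega)

end IsChasePath

section Bellman

variable {V : Type*} {N : V → Finset V} {p T : V → ℝ}

theorem exists_mem_bellman_step (hN : ∀ v, v ∈ N v)
    (hT : ∀ v, T v = 1 + (1 - p v) * (N v).inf' ⟨v, hN v⟩ T) (v : V) :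
    ∃ u ∈ N v, T v = 1 + (1 - p v) * T u ∧ T u ≤ T v := by
  obtain ⟨u, huN, hmin⟩ := Finset.exists_mem_eq_inf' ⟨v, hN v⟩ T
  refine ⟨u, huN, by rw [hT v, hmin], ?_⟩
  rw [← hmin]
  exact Finset.inf'_le T (hN v)

theorem exists_isChasePath_of_bellman [Finite V] (hN : ∀ v, v ∈ N v)
    (hT : ∀ v, T v = 1 + (1 - p v) * (N v).inf' ⟨v, hN v⟩ T) (v : V) :
    ∃ (k : ℕ) (vs : ℕ → V), vs 0 = v ∧ IsChasePath N p T k vs := by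
  by_contra hv
  set S := {v | ¬∃ (k : ℕ) (vs : ℕ → V), vs 0 = v ∧ IsChasePath N p T k vs}
  obtain ⟨w, hwS, hwmin⟩ := S.exists_min_image T S.toFinite ⟨v, hv⟩
  obtain ⟨u, huN, hstep, hle⟩ := exists_mem_bellman_step hN hT w
  rcases hle.lt_or_eq with hlt | heq
  · have hu : u ∉ S := fun hu => (hwmin u hu).not_gt hlt
    obtain ⟨k, vs, rfl, hvs⟩ := not_not.mp hu
    exact hwS ⟨k + 1, hvs.exists_cons huN hstep⟩
  · exact hwS ⟨0, fun _ => w, rfl, IsChasePath.const (heq ▸ hstep)⟩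

end Bellman

theorem stmt_15_general {V : Type*} [Fintype V]
    (N : V → Finset V) (hN : ∀ v, v ∈ N v)
    (p : V → ℝ)
    (Tstar : V → ℝ)
    (hTstar : ∀ v, Tstar v = 1 + (1 - p v) * (N v).inf' ⟨v, hN v⟩ Tstar) :
    ∀ v : V, ∃ (k : ℕ) (vs : ℕ → V), vs 0 = v ∧ IsChasePath N p Tstar k vs :=
  exists_isChasePath_of_bellman hN hTstar

/-- Let `Tstar` be the unique Bellman fixed point. Then every vertex
`v` has at least one chase path with respect to `Tstar` starting at `v`. -/
theorem stmt_15 {V : Type*} [Fintype V] [Nonempty V]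
    (N : V → Finset V) (hN : ∀ v, v ∈ N v)
    (p : V → ℝ) (hp : ∀ v, 0 < p v ∧ p v ≤ 1)
    (Tstar : V → ℝ)
    (hTstar : ∀ v, Tstar v = 1 + (1 - p v) * (N v).inf' ⟨v, hN v⟩ Tstar)
    (huniq : ∀ T : V → ℝ,
      (∀ v, T v = 1 + (1 - p v) * (N v).inf' ⟨v, hN v⟩ T) → T = Tstar) :
    ∀ v : V, ∃ (k : ℕ) (vs : ℕ → V), vs 0 = v ∧ IsChasePath N p Tstar k vs :=
  stmt_15_general N hN p Tstar hTstar
end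

section
/- Let (T_i) be the chase-time iteration, let T* be the unique Bellman fixed point, and let n = |V|. Then T_n(v) = T*(v) for every vertex v; in particular, the chase-time iteration stabilizes after at most n rounds. -/
/-!
A vertex `v` whose value `T* v` is minimal on `N v` satisfies `T* v = 1 / p v`, which is already
the value of the first iterate. Any other vertex attains its Bellman minimum at a neighbour `u`
with `T* u < T* v`; once the iteration is exact at `u` it becomes exact at `v` one round later.
Since the iterates never drop below `T*`, induction on the number of vertices strictly below `v`
shows that the iteration is exact at `v` after that many rounds plus one, and that number is less
than `|V|`.
-/

open Finset

namespace ChaseTime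

variable {V : Type*}

section Rank

variable [Fintype V] {α : Type*} [LinearOrder α]

noncomputable def rank (f : V → α) (v : V) : ℕ :=
  #{u | f u < f v}

lemma rank_lt_card (f : V → α) (v : V) : rank f v < Fintype.card V :=
  (card_lt_card (filter_ssubset.2 ⟨v, mem_univ v, lt_irrefl (f v)⟩)).trans_eq card_univ

lemma rank_lt_rank {f : V → α} {u v : V} (h : f u < f v) : rank f u < rank f v := by
  refine card_lt_card ((ssubset_iff_of_subset fun w hw => ?_).2 ⟨u, ?_, ?_⟩)
  · simp only [mem_filter, mem_univ, true_and] at hw ⊢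
    exact hw.trans h
  · simpa using h
  · simp

end Rank

variable (N : V → Finset V) (hN : ∀ v, v ∈ N v) (p : V → ℝ)

noncomputable def bellman (T : V → ℝ) (v : V) : ℝ :=
  1 + (1 - p v) * (N v).inf' ⟨v, hN v⟩ T

variable {N hN p}

lemma bellman_le_of_mem {T : V → ℝ} {u v : V} (hp : p v ≤ 1) (hu : u ∈ N v) :
    bellman N hN p T v ≤ 1 + (1 - p v) * T u := by
  have : 0 ≤ 1 - p v := by linarith
  unfold bellman
  gcongr
  exact inf'_le _ hu

lemma bellman_mono {T T' : V → ℝ} {v : V} (hp : p v ≤ 1) (h : ∀ u, T u ≤ T' u) :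
    bellman N hN p T v ≤ bellman N hN p T' v := by
  have : 0 ≤ 1 - p v := by linarith
  unfold bellman
  gcongr
  exact le_inf' _ _ fun u hu => (inf'_le _ hu).trans (h u)

section FixedPoint

variable {T : V → ℝ} {v : V}

lemma fixedPoint_le_inv (hT : T v = bellman N hN p T v) (hp0 : 0 < p v) (hp1 : p v ≤ 1) :
    T v ≤ 1 / p v := by
  have := bellman_le_of_mem (T := T) (hN := hN) hp1 (hN v)
  rw [le_div_iff₀ hp0]
  nlinarith

lemma fixedPoint_eq_inv_of_forall_le (hT : T v = bellman N hN p T v) (hp0 : 0 < p v)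
    (hmin : ∀ u ∈ N v, T v ≤ T u) : T v = 1 / p v := by
  have hinf : (N v).inf' ⟨v, hN v⟩ T = T v :=
    le_antisymm (inf'_le _ (hN v)) (le_inf' _ _ hmin)
  rw [bellman, hinf] at hT
  rw [eq_div_iff hp0.ne']
  linarith

end FixedPoint

section Iteration

variable {S : ℕ → V → ℝ} {T : V → ℝ}

lemma iterate_le_inv (hS0 : ∀ v, S 0 v = 1 / p v)
    (hS : ∀ k v, S (k + 1) v = min (S k v) (bellman N hN p (S k) v)) (k : ℕ) (v : V) :
    S k v ≤ 1 / p v := by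
  induction k with
  | zero => exact (hS0 v).le
  | succ k ih => exact (hS k v).trans_le ((min_le_left _ _).trans ih)

lemma fixedPoint_le_iterate (hT : ∀ v, T v = bellman N hN p T v)
    (hp : ∀ v, 0 < p v ∧ p v ≤ 1) (hS0 : ∀ v, S 0 v = 1 / p v)
    (hS : ∀ k v, S (k + 1) v = min (S k v) (bellman N hN p (S k) v)) (k : ℕ) (v : V) :
    T v ≤ S k v := by
  induction k generalizing v with
  | zero => exact (hS0 v).symm ▸ fixedPoint_le_inv (hT v) (hp v).1 (hp v).2
  | succ k ih =>
    rw [hS, hT v]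
    exact le_min ((hT v).symm ▸ ih v) (bellman_mono (hp v).2 ih)

lemma iterate_eq_of_forall_le (hT : ∀ v, T v = bellman N hN p T v)
    (hp : ∀ v, 0 < p v ∧ p v ≤ 1) (hS0 : ∀ v, S 0 v = 1 / p v)
    (hS : ∀ k v, S (k + 1) v = min (S k v) (bellman N hN p (S k) v)) {v : V}
    (hmin : ∀ u ∈ N v, T v ≤ T u) (k : ℕ) : S k v = T v := by
  have hTv := fixedPoint_eq_inv_of_forall_le (hT v) (hp v).1 hmin
  exact le_antisymm (hTv ▸ iterate_le_inv hS0 hS k v) (fixedPoint_le_iterate hT hp hS0 hS k v)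

lemma iterate_succ_eq_of_eq_inf' (hT : ∀ v, T v = bellman N hN p T v)
    (hp : ∀ v, 0 < p v ∧ p v ≤ 1) (hS0 : ∀ v, S 0 v = 1 / p v)
    (hS : ∀ k v, S (k + 1) v = min (S k v) (bellman N hN p (S k) v)) {k : ℕ} {u v : V}
    (hu : u ∈ N v) (hinf : (N v).inf' ⟨v, hN v⟩ T = T u) (hk : S k u = T u) :
    S (k + 1) v = T v := by
  refine le_antisymm ?_ (fixedPoint_le_iterate hT hp hS0 hS (k + 1) v)
  calc S (k + 1) v ≤ bellman N hN p (S k) v := (hS k v).trans_le (min_le_right _ _)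
    _ ≤ 1 + (1 - p v) * S k u := bellman_le_of_mem (hp v).2 hu
    _ = T v := by rw [hk, hT v, bellman, hinf]

lemma iterate_eq_of_rank_le [Fintype V] (hT : ∀ v, T v = bellman N hN p T v)
    (hp : ∀ v, 0 < p v ∧ p v ≤ 1) (hS0 : ∀ v, S 0 v = 1 / p v)
    (hS : ∀ k v, S (k + 1) v = min (S k v) (bellman N hN p (S k) v)) (k : ℕ) (v : V)
    (hk : rank T v ≤ k) : S k v = T v := by
  induction k generalizing v with
  | zero =>
    refine iterate_eq_of_forall_le hT hp hS0 hS (fun u _ => not_lt.1 fun h => ?_) 0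
    have := rank_lt_rank h
    omega
  | succ k ih =>
    obtain ⟨u, hu, hinf⟩ := exists_mem_eq_inf' ⟨v, hN v⟩ T
    rcases le_or_gt (T v) (T u) with hvu | huv
    · exact iterate_eq_of_forall_le hT hp hS0 hS
        (fun w hw => hvu.trans (hinf ▸ inf'_le _ hw)) (k + 1)
    · have := rank_lt_rank huv
      exact iterate_succ_eq_of_eq_inf' hT hp hS0 hS hu hinf (ih u (by omega))

end Iteration

end ChaseTime

theorem stmt_16_general {V : Type*} [Fintype V]
    (N : V → Finset V) (hN : ∀ v, v ∈ N v)
    (p : V → ℝ) (hp : ∀ v, 0 < p v ∧ p v ≤ 1)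
    (Tstar : V → ℝ)
    (hTstar : ∀ v, Tstar v = 1 + (1 - p v) * (N v).inf' ⟨v, hN v⟩ Tstar)
    (Tseq : ℕ → V → ℝ)
    (hTseq1 : ∀ v, Tseq 1 v = 1 / p v)
    (hTseqS : ∀ i, 1 ≤ i → ∀ v,
      Tseq (i + 1) v =
        min (Tseq i v) (1 + (1 - p v) * (N v).inf' ⟨v, hN v⟩ (Tseq i))) :
    (∀ v, Tseq (Fintype.card V) v = Tstar v) ∧
      ∀ i, Fintype.card V ≤ i → ∀ v, Tseq i v = Tstar v := by
  have stable : ∀ i, Fintype.card V ≤ i → ∀ v, Tseq i v = Tstar v := by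
    intro i hi v
    have hrank := ChaseTime.rank_lt_card Tstar v
    obtain _ | k := i
    · omega
    · exact ChaseTime.iterate_eq_of_rank_le (hN := hN) (S := fun k => Tseq (k + 1))
        hTstar hp hTseq1 (fun k => hTseqS (k + 1) (by omega)) k v (by omega)
  exact ⟨stable _ le_rfl, stable⟩

/-- Let `(Tseq i)` be the chase-time iteration, `Tstar` the unique
Bellman fixed point, and `n = |V|`. Then `Tseq n v = Tstar v` for every vertex `v`;
in particular the iteration stabilizes after at most `n` rounds, i.e.
`Tseq i v = Tstar v` for every `i ≥ n`. -/
theorem stmt_16 {V : Type*} [Fintype V] [Nonempty V]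
    (N : V → Finset V) (hN : ∀ v, v ∈ N v)
    (p : V → ℝ) (hp : ∀ v, 0 < p v ∧ p v ≤ 1)
    (Tstar : V → ℝ)
    (hTstar : ∀ v, Tstar v = 1 + (1 - p v) * (N v).inf' ⟨v, hN v⟩ Tstar)
    (huniq : ∀ T : V → ℝ,
      (∀ v, T v = 1 + (1 - p v) * (N v).inf' ⟨v, hN v⟩ T) → T = Tstar)
    (Tseq : ℕ → V → ℝ)
    (hTseq1 : ∀ v, Tseq 1 v = 1 / p v)
    (hTseqS : ∀ i, 1 ≤ i → ∀ v,
      Tseq (i + 1) v =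
        min (Tseq i v) (1 + (1 - p v) * (N v).inf' ⟨v, hN v⟩ (Tseq i))) :
    (∀ v, Tseq (Fintype.card V) v = Tstar v) ∧
      ∀ i, Fintype.card V ≤ i → ∀ v, Tseq i v = Tstar v :=
  stmt_16_general N hN p hp Tstar hTstar Tseq hTseq1 hTseqS
end
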